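/- arXiv:1801.06410 — 4 statements merged into one kernel-verified Lean document; each statement's English description precedes it below -/
import Mathlib

section
/- Define the cross product of vectors X, Y ∈ ℝ⁷ by (X × Y)_k = Σ_{i,j} X_i Y_j φ_{ijk}. Then for all X, Y ∈ ℝ⁷ one has X × (X × Y) = −⟨X, X⟩ Y + ⟨X, Y⟩ X, where ⟨·,·⟩ is the standard inner product on ℝ⁷. -/
open Finset

/-- Kronecker delta on `Fin 7`. -/
def kd (i j : Fin 7) : ℝ := if i = j then 1 else 0

/-- Components of the basic 3-form `e^a ∧ e^b ∧ e^c` (a 3×3 determinant of deltas). -/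
def E3 (a b c i j k : Fin 7) : ℝ :=
  kd a i * kd b j * kd c k + kd a j * kd b k * kd c i + kd a k * kd b i * kd c j
    - kd a i * kd b k * kd c j - kd a j * kd b i * kd c k - kd a k * kd b j * kd c i

/-- The standard G₂ 3-form `φ` on `ℝ⁷`, determined by
`φ_{123} = φ_{145} = φ_{167} = φ_{246} = 1`, `φ_{257} = φ_{347} = φ_{356} = −1`
(indices `1,…,7` correspond to `0,…,6 : Fin 7`). -/
def g2phi (i j k : Fin 7) : ℝ :=
  E3 0 1 2 i j k + E3 0 3 4 i j k + E3 0 5 6 i j k + E3 1 3 5 i j k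
    - E3 1 4 6 i j k - E3 2 3 6 i j k - E3 2 4 5 i j k

/-- Components of the basic 4-form `e^a ∧ e^b ∧ e^c ∧ e^d` (a 4×4 determinant of deltas). -/
def E4 (a b c d i j k l : Fin 7) : ℝ :=
  kd a i * E3 b c d j k l - kd a j * E3 b c d i k l
    + kd a k * E3 b c d i j l - kd a l * E3 b c d i j k

/-- The dual 4-form `ψ = ⋆φ` on `ℝ⁷`, determined by
`ψ_{1247} = ψ_{1256} = ψ_{1346} = 1`, `ψ_{1357} = ψ_{2345} = ψ_{2367} = ψ_{4567} = −1`. -/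
def g2psi (i j k l : Fin 7) : ℝ :=
  E4 0 1 3 6 i j k l + E4 0 1 4 5 i j k l + E4 0 2 3 5 i j k l
    - E4 0 2 4 6 i j k l - E4 1 2 3 4 i j k l - E4 1 2 5 6 i j k l - E4 3 4 5 6 i j k l

open RealInnerProductSpace

/-- The cross product on `ℝ⁷`: `(X × Y)_k = Σ_{i,j} X_i Y_j φ_{ijk}`. -/
noncomputable def g2cross (X Y : EuclideanSpace ℝ (Fin 7)) : EuclideanSpace ℝ (Fin 7) :=
  (WithLp.equiv 2 (∀ _ : Fin 7, ℝ)).symm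
    (fun k => ∑ i : Fin 7, ∑ j : Fin 7, X i * Y j * g2phi i j k)

set_option maxHeartbeats 1000000 in
lemma gcross_0 (X Y : EuclideanSpace ℝ (Fin 7)) : g2cross X Y 0 = X 1 * Y 2 + (-1) * (X 2 * Y 1) + X 3 * Y 4 + (-1) * (X 4 * Y 3) + X 5 * Y 6 + (-1) * (X 6 * Y 5) := by
  show (∑ i : Fin 7, ∑ j : Fin 7, X i * Y j * g2phi i j _) = _
  simp (config := { decide := true }) only [Fin.sum_univ_seven, g2phi, E3, kd, if_true, if_false]
  norm_num

set_option maxHeartbeats 1000000 in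
lemma gcross_1 (X Y : EuclideanSpace ℝ (Fin 7)) : g2cross X Y 1 = (-1) * (X 0 * Y 2) + X 2 * Y 0 + X 3 * Y 5 + (-1) * (X 4 * Y 6) + (-1) * (X 5 * Y 3) + X 6 * Y 4 := by
  show (∑ i : Fin 7, ∑ j : Fin 7, X i * Y j * g2phi i j _) = _
  simp (config := { decide := true }) only [Fin.sum_univ_seven, g2phi, E3, kd, if_true, if_false]
  norm_num

set_option maxHeartbeats 1000000 in
lemma gcross_2 (X Y : EuclideanSpace ℝ (Fin 7)) : g2cross X Y 2 = X 0 * Y 1 + (-1) * (X 1 * Y 0) + (-1) * (X 3 * Y 6) + (-1) * (X 4 * Y 5) + X 5 * Y 4 + X 6 * Y 3 := by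
  show (∑ i : Fin 7, ∑ j : Fin 7, X i * Y j * g2phi i j _) = _
  simp (config := { decide := true }) only [Fin.sum_univ_seven, g2phi, E3, kd, if_true, if_false]
  norm_num

set_option maxHeartbeats 1000000 in
lemma gcross_3 (X Y : EuclideanSpace ℝ (Fin 7)) : g2cross X Y 3 = (-1) * (X 0 * Y 4) + (-1) * (X 1 * Y 5) + X 2 * Y 6 + X 4 * Y 0 + X 5 * Y 1 + (-1) * (X 6 * Y 2) := by
  show (∑ i : Fin 7, ∑ j : Fin 7, X i * Y j * g2phi i j _) = _
  simp (config := { decide := true }) only [Fin.sum_univ_seven, g2phi, E3, kd, if_true, if_false]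
  norm_num

set_option maxHeartbeats 1000000 in
lemma gcross_4 (X Y : EuclideanSpace ℝ (Fin 7)) : g2cross X Y 4 = X 0 * Y 3 + X 1 * Y 6 + X 2 * Y 5 + (-1) * (X 3 * Y 0) + (-1) * (X 5 * Y 2) + (-1) * (X 6 * Y 1) := by
  show (∑ i : Fin 7, ∑ j : Fin 7, X i * Y j * g2phi i j _) = _
  simp (config := { decide := true }) only [Fin.sum_univ_seven, g2phi, E3, kd, if_true, if_false]
  norm_num

set_option maxHeartbeats 1000000 in
lemma gcross_5 (X Y : EuclideanSpace ℝ (Fin 7)) : g2cross X Y 5 = (-1) * (X 0 * Y 6) + X 1 * Y 3 + (-1) * (X 2 * Y 4) + (-1) * (X 3 * Y 1) + X 4 * Y 2 + X 6 * Y 0 := by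
  show (∑ i : Fin 7, ∑ j : Fin 7, X i * Y j * g2phi i j _) = _
  simp (config := { decide := true }) only [Fin.sum_univ_seven, g2phi, E3, kd, if_true, if_false]
  norm_num

set_option maxHeartbeats 1000000 in
lemma gcross_6 (X Y : EuclideanSpace ℝ (Fin 7)) : g2cross X Y 6 = X 0 * Y 5 + (-1) * (X 1 * Y 4) + (-1) * (X 2 * Y 3) + X 3 * Y 2 + X 4 * Y 1 + (-1) * (X 5 * Y 0) := by
  show (∑ i : Fin 7, ∑ j : Fin 7, X i * Y j * g2phi i j _) = _
  simp (config := { decide := true }) only [Fin.sum_univ_seven, g2phi, E3, kd, if_true, if_false]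
  norm_num

set_option maxHeartbeats 2000000 in
lemma hcomp0 (X Y : EuclideanSpace ℝ (Fin 7)) :
    g2cross X (g2cross X Y) 0
      = -(∑ i : Fin 7, X i * X i) * Y 0 + (∑ i : Fin 7, X i * Y i) * X 0 := by
  simp only [Fin.sum_univ_seven, gcross_0, gcross_1, gcross_2, gcross_3, gcross_4,
    gcross_5, gcross_6]
  ring

set_option maxHeartbeats 2000000 in
lemma hcomp1 (X Y : EuclideanSpace ℝ (Fin 7)) :
    g2cross X (g2cross X Y) 1
      = -(∑ i : Fin 7, X i * X i) * Y 1 + (∑ i : Fin 7, X i * Y i) * X 1 := by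
  simp only [Fin.sum_univ_seven, gcross_0, gcross_1, gcross_2, gcross_3, gcross_4,
    gcross_5, gcross_6]
  ring

set_option maxHeartbeats 2000000 in
lemma hcomp2 (X Y : EuclideanSpace ℝ (Fin 7)) :
    g2cross X (g2cross X Y) 2
      = -(∑ i : Fin 7, X i * X i) * Y 2 + (∑ i : Fin 7, X i * Y i) * X 2 := by
  simp only [Fin.sum_univ_seven, gcross_0, gcross_1, gcross_2, gcross_3, gcross_4,
    gcross_5, gcross_6]
  ring

set_option maxHeartbeats 2000000 in
lemma hcomp3 (X Y : EuclideanSpace ℝ (Fin 7)) :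
    g2cross X (g2cross X Y) 3
      = -(∑ i : Fin 7, X i * X i) * Y 3 + (∑ i : Fin 7, X i * Y i) * X 3 := by
  simp only [Fin.sum_univ_seven, gcross_0, gcross_1, gcross_2, gcross_3, gcross_4,
    gcross_5, gcross_6]
  ring

set_option maxHeartbeats 2000000 in
lemma hcomp4 (X Y : EuclideanSpace ℝ (Fin 7)) :
    g2cross X (g2cross X Y) 4
      = -(∑ i : Fin 7, X i * X i) * Y 4 + (∑ i : Fin 7, X i * Y i) * X 4 := by
  simp only [Fin.sum_univ_seven, gcross_0, gcross_1, gcross_2, gcross_3, gcross_4,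
    gcross_5, gcross_6]
  ring

set_option maxHeartbeats 2000000 in
lemma hcomp5 (X Y : EuclideanSpace ℝ (Fin 7)) :
    g2cross X (g2cross X Y) 5
      = -(∑ i : Fin 7, X i * X i) * Y 5 + (∑ i : Fin 7, X i * Y i) * X 5 := by
  simp only [Fin.sum_univ_seven, gcross_0, gcross_1, gcross_2, gcross_3, gcross_4,
    gcross_5, gcross_6]
  ring

set_option maxHeartbeats 2000000 in
lemma hcomp6 (X Y : EuclideanSpace ℝ (Fin 7)) :
    g2cross X (g2cross X Y) 6
      = -(∑ i : Fin 7, X i * X i) * Y 6 + (∑ i : Fin 7, X i * Y i) * X 6 := by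
  simp only [Fin.sum_univ_seven, gcross_0, gcross_1, gcross_2, gcross_3, gcross_4,
    gcross_5, gcross_6]
  ring

set_option maxHeartbeats 2000000 in
/-- Lemma 2.3: `X × (X × Y) = −⟨X, X⟩ Y + ⟨X, Y⟩ X`. -/
theorem stmt_9 (X Y : EuclideanSpace ℝ (Fin 7)) :
    g2cross X (g2cross X Y) = -⟪X, X⟫ • Y + ⟪X, Y⟫ • X := by
  have hXX : ⟪X, X⟫ = ∑ i : Fin 7, X i * X i := by
    simp only [PiLp.inner_apply, RCLike.inner_apply, conj_trivial]
  have hXY : ⟪X, Y⟫ = ∑ i : Fin 7, X i * Y i := by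
    simp only [PiLp.inner_apply, RCLike.inner_apply, conj_trivial]
    exact Finset.sum_congr rfl fun i _ => mul_comm _ _
  ext k
  have hR : (-⟪X, X⟫ • Y + ⟪X, Y⟫ • X) k
      = -(∑ i : Fin 7, X i * X i) * Y k + (∑ i : Fin 7, X i * Y i) * X k := by
    simp only [PiLp.add_apply, PiLp.smul_apply, smul_eq_mul, hXX, hXY, neg_mul, neg_smul,
      PiLp.neg_apply]
  rw [hR]
  fin_cases k <;>
    [exact hcomp0 X Y; exact hcomp1 X Y; exact hcomp2 X Y; exact hcomp3 X Y;
     exact hcomp4 X Y; exact hcomp5 X Y; exact hcomp6 X Y]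
end

section
/- Let h : Fin 7 → Fin 7 → ℝ be symmetric (h_{pq} = h_{qp} for all p, q). Then the 6-form Σ_{p,q} h_{pq} (e_p ⌟ ψ) ∧ (e_q ⌟ ψ) is identically zero, i.e. all of its components vanish. -/
open Finset

/-- Wedge product of two 2-forms on `ℝ⁷`, in components:
`(α ∧ β)_{i₁…i₄} = (1/(2!·2!)) Σ_{σ ∈ S₄} sgn(σ) α_{i_{σ(1)} i_{σ(2)}} β_{i_{σ(3)} i_{σ(4)}}`. -/
noncomputable def wedge22 (α β : Fin 7 → Fin 7 → ℝ) (i j k l : Fin 7) : ℝ :=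
  (1 : ℝ) / ((Nat.factorial 2 : ℝ) * (Nat.factorial 2 : ℝ)) *
    ∑ σ : Equiv.Perm (Fin 4),
      ((Equiv.Perm.sign σ : ℤ) : ℝ) *
        (α (![i, j, k, l] (σ 0)) (![i, j, k, l] (σ 1)) *
          β (![i, j, k, l] (σ 2)) (![i, j, k, l] (σ 3)))

/-- Wedge product of a 2-form and a 1-form on `ℝ⁷`, in components. -/
noncomputable def wedge21 (α : Fin 7 → Fin 7 → ℝ) (β : Fin 7 → ℝ) (i j k : Fin 7) : ℝ :=
  (1 : ℝ) / ((Nat.factorial 2 : ℝ) * (Nat.factorial 1 : ℝ)) *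
    ∑ σ : Equiv.Perm (Fin 3),
      ((Equiv.Perm.sign σ : ℤ) : ℝ) *
        (α (![i, j, k] (σ 0)) (![i, j, k] (σ 1)) * β (![i, j, k] (σ 2)))

/-- Wedge product of a 2-form and a 3-form on `ℝ⁷`, in components. -/
noncomputable def wedge23 (α : Fin 7 → Fin 7 → ℝ) (β : Fin 7 → Fin 7 → Fin 7 → ℝ)
    (i1 i2 i3 i4 i5 : Fin 7) : ℝ :=
  (1 : ℝ) / ((Nat.factorial 2 : ℝ) * (Nat.factorial 3 : ℝ)) *
    ∑ σ : Equiv.Perm (Fin 5),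
      ((Equiv.Perm.sign σ : ℤ) : ℝ) *
        (α (![i1, i2, i3, i4, i5] (σ 0)) (![i1, i2, i3, i4, i5] (σ 1)) *
          β (![i1, i2, i3, i4, i5] (σ 2)) (![i1, i2, i3, i4, i5] (σ 3))
            (![i1, i2, i3, i4, i5] (σ 4)))

/-- Wedge product of a 3-form and a 1-form on `ℝ⁷`, in components. -/
noncomputable def wedge31 (α : Fin 7 → Fin 7 → Fin 7 → ℝ) (β : Fin 7 → ℝ)
    (i j k l : Fin 7) : ℝ :=
  (1 : ℝ) / ((Nat.factorial 3 : ℝ) * (Nat.factorial 1 : ℝ)) *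
    ∑ σ : Equiv.Perm (Fin 4),
      ((Equiv.Perm.sign σ : ℤ) : ℝ) *
        (α (![i, j, k, l] (σ 0)) (![i, j, k, l] (σ 1)) (![i, j, k, l] (σ 2)) *
          β (![i, j, k, l] (σ 3)))

/-- Wedge product of a 3-form and a 2-form on `ℝ⁷`, in components. -/
noncomputable def wedge32 (α : Fin 7 → Fin 7 → Fin 7 → ℝ) (β : Fin 7 → Fin 7 → ℝ)
    (i1 i2 i3 i4 i5 : Fin 7) : ℝ :=
  (1 : ℝ) / ((Nat.factorial 3 : ℝ) * (Nat.factorial 2 : ℝ)) *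
    ∑ σ : Equiv.Perm (Fin 5),
      ((Equiv.Perm.sign σ : ℤ) : ℝ) *
        (α (![i1, i2, i3, i4, i5] (σ 0)) (![i1, i2, i3, i4, i5] (σ 1))
            (![i1, i2, i3, i4, i5] (σ 2)) *
          β (![i1, i2, i3, i4, i5] (σ 3)) (![i1, i2, i3, i4, i5] (σ 4)))

/-- Wedge product of two 3-forms on `ℝ⁷`, in components. -/
noncomputable def wedge33 (α β : Fin 7 → Fin 7 → Fin 7 → ℝ)
    (i1 i2 i3 i4 i5 i6 : Fin 7) : ℝ :=
  (1 : ℝ) / ((Nat.factorial 3 : ℝ) * (Nat.factorial 3 : ℝ)) *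
    ∑ σ : Equiv.Perm (Fin 6),
      ((Equiv.Perm.sign σ : ℤ) : ℝ) *
        (α (![i1, i2, i3, i4, i5, i6] (σ 0)) (![i1, i2, i3, i4, i5, i6] (σ 1))
            (![i1, i2, i3, i4, i5, i6] (σ 2)) *
          β (![i1, i2, i3, i4, i5, i6] (σ 3)) (![i1, i2, i3, i4, i5, i6] (σ 4))
            (![i1, i2, i3, i4, i5, i6] (σ 5)))

/-- `(ℓ_φ h)_{ijk} = Σ_m (h_{im} φ_{mjk} + h_{jm} φ_{imk} + h_{km} φ_{ijm})`. -/
noncomputable def ellphi (h : Fin 7 → Fin 7 → ℝ) (i j k : Fin 7) : ℝ :=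
  ∑ m : Fin 7, (h i m * g2phi m j k + h j m * g2phi i m k + h k m * g2phi i j m)

/-- `(ℓ_ψ h)_{ijkl} = Σ_m (h_{im} ψ_{mjkl} + h_{jm} ψ_{imkl} + h_{km} ψ_{ijml} + h_{lm} ψ_{ijkm})`. -/
noncomputable def ellpsi (h : Fin 7 → Fin 7 → ℝ) (i j k l : Fin 7) : ℝ :=
  ∑ m : Fin 7,
    (h i m * g2psi m j k l + h j m * g2psi i m k l + h k m * g2psi i j m l + h l m * g2psi i j k m)

def tau6 : Equiv.Perm (Fin 6) :=
  (Equiv.swap 0 3) * (Equiv.swap 1 4) * (Equiv.swap 2 5)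

lemma tau6_sign : (Equiv.Perm.sign tau6 : ℤ) = -1 := by decide
lemma tau6_0 : tau6 0 = 3 := by decide
lemma tau6_1 : tau6 1 = 4 := by decide
lemma tau6_2 : tau6 2 = 5 := by decide
lemma tau6_3 : tau6 3 = 0 := by decide
lemma tau6_4 : tau6 4 = 1 := by decide
lemma tau6_5 : tau6 5 = 2 := by decide

lemma wedge33_skew (α β : Fin 7 → Fin 7 → Fin 7 → ℝ) (i1 i2 i3 i4 i5 i6 : Fin 7) :
    wedge33 β α i1 i2 i3 i4 i5 i6 = - wedge33 α β i1 i2 i3 i4 i5 i6 := by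
  unfold wedge33
  rw [← mul_neg, ← Finset.sum_neg_distrib]
  congr 1
  refine Fintype.sum_equiv (Equiv.mulRight tau6) _ _ (fun σ => ?_)
  have hs : ((Equiv.Perm.sign (σ * tau6) : ℤ) : ℝ) = -((Equiv.Perm.sign σ : ℤ) : ℝ) := by
    rw [Equiv.Perm.sign_mul]
    push_cast [tau6_sign]
    ring
  simp only [Equiv.coe_mulRight, Equiv.Perm.mul_apply, tau6_0, tau6_1, tau6_2, tau6_3,
    tau6_4, tau6_5, hs]
  ring

/-- Proposition 2.5, third identity: for symmetric `h`,
`Σ_{p,q} h_{pq} (e_p ⌟ ψ) ∧ (e_q ⌟ ψ) = 0`. -/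
theorem stmt_12 (h : Fin 7 → Fin 7 → ℝ) (hsymm : ∀ p q, h p q = h q p)
    (i1 i2 i3 i4 i5 i6 : Fin 7) :
    ∑ p : Fin 7, ∑ q : Fin 7,
        h p q * wedge33 (fun a b c => g2psi p a b c) (fun a b c => g2psi q a b c)
          i1 i2 i3 i4 i5 i6 =
      0 := by
  have key : ∀ p q : Fin 7,
      wedge33 (fun a b c => g2psi q a b c) (fun a b c => g2psi p a b c) i1 i2 i3 i4 i5 i6 =
        - wedge33 (fun a b c => g2psi p a b c) (fun a b c => g2psi q a b c) i1 i2 i3 i4 i5 i6 :=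
    fun p q => wedge33_skew _ _ _ _ _ _ _ _
  set S := ∑ p : Fin 7, ∑ q : Fin 7,
      h p q * wedge33 (fun a b c => g2psi p a b c) (fun a b c => g2psi q a b c) i1 i2 i3 i4 i5 i6
    with hS
  have hneg : S = -S := by
    conv_lhs => rw [hS, Finset.sum_comm]
    rw [hS, ← Finset.sum_neg_distrib]
    refine Finset.sum_congr rfl fun a _ => ?_
    rw [← Finset.sum_neg_distrib]
    refine Finset.sum_congr rfl fun b _ => ?_
    rw [key a b, hsymm b a]
    ring
  linarith
end

section
/- For every fixed m ∈ Fin 7, the 3-form Σ_p (e_p ⌟ φ) ∧ (e_p ⌟ (e_m ⌟ φ)) equals 3 (e_m ⌟ ψ); explicitly, for all i, j, k ∈ Fin 7, Σ_p (φ_{pij} φ_{mpk} + φ_{pjk} φ_{mpi} + φ_{pki} φ_{mpj}) = 3 ψ_{mijk}. -/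
open Finset

/- ### Auxiliary integer versions and tables -/

def kdZ (i j : Fin 7) : ℤ := if i = j then 1 else 0
def E3Z (a b c i j k : Fin 7) : ℤ :=
  kdZ a i * kdZ b j * kdZ c k + kdZ a j * kdZ b k * kdZ c i + kdZ a k * kdZ b i * kdZ c j
    - kdZ a i * kdZ b k * kdZ c j - kdZ a j * kdZ b i * kdZ c k - kdZ a k * kdZ b j * kdZ c i
def g2phiZ (i j k : Fin 7) : ℤ :=
  E3Z 0 1 2 i j k + E3Z 0 3 4 i j k + E3Z 0 5 6 i j k + E3Z 1 3 5 i j k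
    - E3Z 1 4 6 i j k - E3Z 2 3 6 i j k - E3Z 2 4 5 i j k
def E4Z (a b c d i j k l : Fin 7) : ℤ :=
  kdZ a i * E3Z b c d j k l - kdZ a j * E3Z b c d i k l
    + kdZ a k * E3Z b c d i j l - kdZ a l * E3Z b c d i j k
def g2psiZ (i j k l : Fin 7) : ℤ :=
  E4Z 0 1 3 6 i j k l + E4Z 0 1 4 5 i j k l + E4Z 0 2 3 5 i j k l
    - E4Z 0 2 4 6 i j k l - E4Z 1 2 3 4 i j k l - E4Z 1 2 5 6 i j k l - E4Z 3 4 5 6 i j k l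

def phiT : Fin 7 → Fin 7 → Fin 7 → ℤ :=
  ![![![0, 0, 0, 0, 0, 0, 0], ![0, 0, 1, 0, 0, 0, 0], ![0, -1, 0, 0, 0, 0, 0], ![0, 0, 0, 0, 1, 0, 0], ![0, 0, 0, -1, 0, 0, 0], ![0, 0, 0, 0, 0, 0, 1], ![0, 0, 0, 0, 0, -1, 0]],
  ![![0, 0, -1, 0, 0, 0, 0], ![0, 0, 0, 0, 0, 0, 0], ![1, 0, 0, 0, 0, 0, 0], ![0, 0, 0, 0, 0, 1, 0], ![0, 0, 0, 0, 0, 0, -1], ![0, 0, 0, -1, 0, 0, 0], ![0, 0, 0, 0, 1, 0, 0]],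
  ![![0, 1, 0, 0, 0, 0, 0], ![-1, 0, 0, 0, 0, 0, 0], ![0, 0, 0, 0, 0, 0, 0], ![0, 0, 0, 0, 0, 0, -1], ![0, 0, 0, 0, 0, -1, 0], ![0, 0, 0, 0, 1, 0, 0], ![0, 0, 0, 1, 0, 0, 0]],
  ![![0, 0, 0, 0, -1, 0, 0], ![0, 0, 0, 0, 0, -1, 0], ![0, 0, 0, 0, 0, 0, 1], ![0, 0, 0, 0, 0, 0, 0], ![1, 0, 0, 0, 0, 0, 0], ![0, 1, 0, 0, 0, 0, 0], ![0, 0, -1, 0, 0, 0, 0]],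
  ![![0, 0, 0, 1, 0, 0, 0], ![0, 0, 0, 0, 0, 0, 1], ![0, 0, 0, 0, 0, 1, 0], ![-1, 0, 0, 0, 0, 0, 0], ![0, 0, 0, 0, 0, 0, 0], ![0, 0, -1, 0, 0, 0, 0], ![0, -1, 0, 0, 0, 0, 0]],
  ![![0, 0, 0, 0, 0, 0, -1], ![0, 0, 0, 1, 0, 0, 0], ![0, 0, 0, 0, -1, 0, 0], ![0, -1, 0, 0, 0, 0, 0], ![0, 0, 1, 0, 0, 0, 0], ![0, 0, 0, 0, 0, 0, 0], ![1, 0, 0, 0, 0, 0, 0]],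
  ![![0, 0, 0, 0, 0, 1, 0], ![0, 0, 0, 0, -1, 0, 0], ![0, 0, 0, -1, 0, 0, 0], ![0, 0, 1, 0, 0, 0, 0], ![0, 1, 0, 0, 0, 0, 0], ![-1, 0, 0, 0, 0, 0, 0], ![0, 0, 0, 0, 0, 0, 0]]]

def psiT : Fin 7 → Fin 7 → Fin 7 → Fin 7 → ℤ :=
  ![![![![0, 0, 0, 0, 0, 0, 0], ![0, 0, 0, 0, 0, 0, 0], ![0, 0, 0, 0, 0, 0, 0], ![0, 0, 0, 0, 0, 0, 0], ![0, 0, 0, 0, 0, 0, 0], ![0, 0, 0, 0, 0, 0, 0], ![0, 0, 0, 0, 0, 0, 0]],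
   ![![0, 0, 0, 0, 0, 0, 0], ![0, 0, 0, 0, 0, 0, 0], ![0, 0, 0, 0, 0, 0, 0], ![0, 0, 0, 0, 0, 0, 1], ![0, 0, 0, 0, 0, 1, 0], ![0, 0, 0, 0, -1, 0, 0], ![0, 0, 0, -1, 0, 0, 0]],
   ![![0, 0, 0, 0, 0, 0, 0], ![0, 0, 0, 0, 0, 0, 0], ![0, 0, 0, 0, 0, 0, 0], ![0, 0, 0, 0, 0, 1, 0], ![0, 0, 0, 0, 0, 0, -1], ![0, 0, 0, -1, 0, 0, 0], ![0, 0, 0, 0, 1, 0, 0]],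
   ![![0, 0, 0, 0, 0, 0, 0], ![0, 0, 0, 0, 0, 0, -1], ![0, 0, 0, 0, 0, -1, 0], ![0, 0, 0, 0, 0, 0, 0], ![0, 0, 0, 0, 0, 0, 0], ![0, 0, 1, 0, 0, 0, 0], ![0, 1, 0, 0, 0, 0, 0]],
   ![![0, 0, 0, 0, 0, 0, 0], ![0, 0, 0, 0, 0, -1, 0], ![0, 0, 0, 0, 0, 0, 1], ![0, 0, 0, 0, 0, 0, 0], ![0, 0, 0, 0, 0, 0, 0], ![0, 1, 0, 0, 0, 0, 0], ![0, 0, -1, 0, 0, 0, 0]],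
   ![![0, 0, 0, 0, 0, 0, 0], ![0, 0, 0, 0, 1, 0, 0], ![0, 0, 0, 1, 0, 0, 0], ![0, 0, -1, 0, 0, 0, 0], ![0, -1, 0, 0, 0, 0, 0], ![0, 0, 0, 0, 0, 0, 0], ![0, 0, 0, 0, 0, 0, 0]],
   ![![0, 0, 0, 0, 0, 0, 0], ![0, 0, 0, 1, 0, 0, 0], ![0, 0, 0, 0, -1, 0, 0], ![0, -1, 0, 0, 0, 0, 0], ![0, 0, 1, 0, 0, 0, 0], ![0, 0, 0, 0, 0, 0, 0], ![0, 0, 0, 0, 0, 0, 0]]],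
  ![![![0, 0, 0, 0, 0, 0, 0], ![0, 0, 0, 0, 0, 0, 0], ![0, 0, 0, 0, 0, 0, 0], ![0, 0, 0, 0, 0, 0, -1], ![0, 0, 0, 0, 0, -1, 0], ![0, 0, 0, 0, 1, 0, 0], ![0, 0, 0, 1, 0, 0, 0]],
   ![![0, 0, 0, 0, 0, 0, 0], ![0, 0, 0, 0, 0, 0, 0], ![0, 0, 0, 0, 0, 0, 0], ![0, 0, 0, 0, 0, 0, 0], ![0, 0, 0, 0, 0, 0, 0], ![0, 0, 0, 0, 0, 0, 0], ![0, 0, 0, 0, 0, 0, 0]],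
   ![![0, 0, 0, 0, 0, 0, 0], ![0, 0, 0, 0, 0, 0, 0], ![0, 0, 0, 0, 0, 0, 0], ![0, 0, 0, 0, -1, 0, 0], ![0, 0, 0, 1, 0, 0, 0], ![0, 0, 0, 0, 0, 0, -1], ![0, 0, 0, 0, 0, 1, 0]],
   ![![0, 0, 0, 0, 0, 0, 1], ![0, 0, 0, 0, 0, 0, 0], ![0, 0, 0, 0, 1, 0, 0], ![0, 0, 0, 0, 0, 0, 0], ![0, 0, -1, 0, 0, 0, 0], ![0, 0, 0, 0, 0, 0, 0], ![-1, 0, 0, 0, 0, 0, 0]],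
   ![![0, 0, 0, 0, 0, 1, 0], ![0, 0, 0, 0, 0, 0, 0], ![0, 0, 0, -1, 0, 0, 0], ![0, 0, 1, 0, 0, 0, 0], ![0, 0, 0, 0, 0, 0, 0], ![-1, 0, 0, 0, 0, 0, 0], ![0, 0, 0, 0, 0, 0, 0]],
   ![![0, 0, 0, 0, -1, 0, 0], ![0, 0, 0, 0, 0, 0, 0], ![0, 0, 0, 0, 0, 0, 1], ![0, 0, 0, 0, 0, 0, 0], ![1, 0, 0, 0, 0, 0, 0], ![0, 0, 0, 0, 0, 0, 0], ![0, 0, -1, 0, 0, 0, 0]],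
   ![![0, 0, 0, -1, 0, 0, 0], ![0, 0, 0, 0, 0, 0, 0], ![0, 0, 0, 0, 0, -1, 0], ![1, 0, 0, 0, 0, 0, 0], ![0, 0, 0, 0, 0, 0, 0], ![0, 0, 1, 0, 0, 0, 0], ![0, 0, 0, 0, 0, 0, 0]]],
  ![![![0, 0, 0, 0, 0, 0, 0], ![0, 0, 0, 0, 0, 0, 0], ![0, 0, 0, 0, 0, 0, 0], ![0, 0, 0, 0, 0, -1, 0], ![0, 0, 0, 0, 0, 0, 1], ![0, 0, 0, 1, 0, 0, 0], ![0, 0, 0, 0, -1, 0, 0]],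
   ![![0, 0, 0, 0, 0, 0, 0], ![0, 0, 0, 0, 0, 0, 0], ![0, 0, 0, 0, 0, 0, 0], ![0, 0, 0, 0, 1, 0, 0], ![0, 0, 0, -1, 0, 0, 0], ![0, 0, 0, 0, 0, 0, 1], ![0, 0, 0, 0, 0, -1, 0]],
   ![![0, 0, 0, 0, 0, 0, 0], ![0, 0, 0, 0, 0, 0, 0], ![0, 0, 0, 0, 0, 0, 0], ![0, 0, 0, 0, 0, 0, 0], ![0, 0, 0, 0, 0, 0, 0], ![0, 0, 0, 0, 0, 0, 0], ![0, 0, 0, 0, 0, 0, 0]],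
   ![![0, 0, 0, 0, 0, 1, 0], ![0, 0, 0, 0, -1, 0, 0], ![0, 0, 0, 0, 0, 0, 0], ![0, 0, 0, 0, 0, 0, 0], ![0, 1, 0, 0, 0, 0, 0], ![-1, 0, 0, 0, 0, 0, 0], ![0, 0, 0, 0, 0, 0, 0]],
   ![![0, 0, 0, 0, 0, 0, -1], ![0, 0, 0, 1, 0, 0, 0], ![0, 0, 0, 0, 0, 0, 0], ![0, -1, 0, 0, 0, 0, 0], ![0, 0, 0, 0, 0, 0, 0], ![0, 0, 0, 0, 0, 0, 0], ![1, 0, 0, 0, 0, 0, 0]],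
   ![![0, 0, 0, -1, 0, 0, 0], ![0, 0, 0, 0, 0, 0, -1], ![0, 0, 0, 0, 0, 0, 0], ![1, 0, 0, 0, 0, 0, 0], ![0, 0, 0, 0, 0, 0, 0], ![0, 0, 0, 0, 0, 0, 0], ![0, 1, 0, 0, 0, 0, 0]],
   ![![0, 0, 0, 0, 1, 0, 0], ![0, 0, 0, 0, 0, 1, 0], ![0, 0, 0, 0, 0, 0, 0], ![0, 0, 0, 0, 0, 0, 0], ![-1, 0, 0, 0, 0, 0, 0], ![0, -1, 0, 0, 0, 0, 0], ![0, 0, 0, 0, 0, 0, 0]]],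
  ![![![0, 0, 0, 0, 0, 0, 0], ![0, 0, 0, 0, 0, 0, 1], ![0, 0, 0, 0, 0, 1, 0], ![0, 0, 0, 0, 0, 0, 0], ![0, 0, 0, 0, 0, 0, 0], ![0, 0, -1, 0, 0, 0, 0], ![0, -1, 0, 0, 0, 0, 0]],
   ![![0, 0, 0, 0, 0, 0, -1], ![0, 0, 0, 0, 0, 0, 0], ![0, 0, 0, 0, -1, 0, 0], ![0, 0, 0, 0, 0, 0, 0], ![0, 0, 1, 0, 0, 0, 0], ![0, 0, 0, 0, 0, 0, 0], ![1, 0, 0, 0, 0, 0, 0]],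
   ![![0, 0, 0, 0, 0, -1, 0], ![0, 0, 0, 0, 1, 0, 0], ![0, 0, 0, 0, 0, 0, 0], ![0, 0, 0, 0, 0, 0, 0], ![0, -1, 0, 0, 0, 0, 0], ![1, 0, 0, 0, 0, 0, 0], ![0, 0, 0, 0, 0, 0, 0]],
   ![![0, 0, 0, 0, 0, 0, 0], ![0, 0, 0, 0, 0, 0, 0], ![0, 0, 0, 0, 0, 0, 0], ![0, 0, 0, 0, 0, 0, 0], ![0, 0, 0, 0, 0, 0, 0], ![0, 0, 0, 0, 0, 0, 0], ![0, 0, 0, 0, 0, 0, 0]],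
   ![![0, 0, 0, 0, 0, 0, 0], ![0, 0, -1, 0, 0, 0, 0], ![0, 1, 0, 0, 0, 0, 0], ![0, 0, 0, 0, 0, 0, 0], ![0, 0, 0, 0, 0, 0, 0], ![0, 0, 0, 0, 0, 0, -1], ![0, 0, 0, 0, 0, 1, 0]],
   ![![0, 0, 1, 0, 0, 0, 0], ![0, 0, 0, 0, 0, 0, 0], ![-1, 0, 0, 0, 0, 0, 0], ![0, 0, 0, 0, 0, 0, 0], ![0, 0, 0, 0, 0, 0, 1], ![0, 0, 0, 0, 0, 0, 0], ![0, 0, 0, 0, -1, 0, 0]],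
   ![![0, 1, 0, 0, 0, 0, 0], ![-1, 0, 0, 0, 0, 0, 0], ![0, 0, 0, 0, 0, 0, 0], ![0, 0, 0, 0, 0, 0, 0], ![0, 0, 0, 0, 0, -1, 0], ![0, 0, 0, 0, 1, 0, 0], ![0, 0, 0, 0, 0, 0, 0]]],
  ![![![0, 0, 0, 0, 0, 0, 0], ![0, 0, 0, 0, 0, 1, 0], ![0, 0, 0, 0, 0, 0, -1], ![0, 0, 0, 0, 0, 0, 0], ![0, 0, 0, 0, 0, 0, 0], ![0, -1, 0, 0, 0, 0, 0], ![0, 0, 1, 0, 0, 0, 0]],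
   ![![0, 0, 0, 0, 0, -1, 0], ![0, 0, 0, 0, 0, 0, 0], ![0, 0, 0, 1, 0, 0, 0], ![0, 0, -1, 0, 0, 0, 0], ![0, 0, 0, 0, 0, 0, 0], ![1, 0, 0, 0, 0, 0, 0], ![0, 0, 0, 0, 0, 0, 0]],
   ![![0, 0, 0, 0, 0, 0, 1], ![0, 0, 0, -1, 0, 0, 0], ![0, 0, 0, 0, 0, 0, 0], ![0, 1, 0, 0, 0, 0, 0], ![0, 0, 0, 0, 0, 0, 0], ![0, 0, 0, 0, 0, 0, 0], ![-1, 0, 0, 0, 0, 0, 0]],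
   ![![0, 0, 0, 0, 0, 0, 0], ![0, 0, 1, 0, 0, 0, 0], ![0, -1, 0, 0, 0, 0, 0], ![0, 0, 0, 0, 0, 0, 0], ![0, 0, 0, 0, 0, 0, 0], ![0, 0, 0, 0, 0, 0, 1], ![0, 0, 0, 0, 0, -1, 0]],
   ![![0, 0, 0, 0, 0, 0, 0], ![0, 0, 0, 0, 0, 0, 0], ![0, 0, 0, 0, 0, 0, 0], ![0, 0, 0, 0, 0, 0, 0], ![0, 0, 0, 0, 0, 0, 0], ![0, 0, 0, 0, 0, 0, 0], ![0, 0, 0, 0, 0, 0, 0]],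
   ![![0, 1, 0, 0, 0, 0, 0], ![-1, 0, 0, 0, 0, 0, 0], ![0, 0, 0, 0, 0, 0, 0], ![0, 0, 0, 0, 0, 0, -1], ![0, 0, 0, 0, 0, 0, 0], ![0, 0, 0, 0, 0, 0, 0], ![0, 0, 0, 1, 0, 0, 0]],
   ![![0, 0, -1, 0, 0, 0, 0], ![0, 0, 0, 0, 0, 0, 0], ![1, 0, 0, 0, 0, 0, 0], ![0, 0, 0, 0, 0, 1, 0], ![0, 0, 0, 0, 0, 0, 0], ![0, 0, 0, -1, 0, 0, 0], ![0, 0, 0, 0, 0, 0, 0]]],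
  ![![![0, 0, 0, 0, 0, 0, 0], ![0, 0, 0, 0, -1, 0, 0], ![0, 0, 0, -1, 0, 0, 0], ![0, 0, 1, 0, 0, 0, 0], ![0, 1, 0, 0, 0, 0, 0], ![0, 0, 0, 0, 0, 0, 0], ![0, 0, 0, 0, 0, 0, 0]],
   ![![0, 0, 0, 0, 1, 0, 0], ![0, 0, 0, 0, 0, 0, 0], ![0, 0, 0, 0, 0, 0, -1], ![0, 0, 0, 0, 0, 0, 0], ![-1, 0, 0, 0, 0, 0, 0], ![0, 0, 0, 0, 0, 0, 0], ![0, 0, 1, 0, 0, 0, 0]],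
   ![![0, 0, 0, 1, 0, 0, 0], ![0, 0, 0, 0, 0, 0, 1], ![0, 0, 0, 0, 0, 0, 0], ![-1, 0, 0, 0, 0, 0, 0], ![0, 0, 0, 0, 0, 0, 0], ![0, 0, 0, 0, 0, 0, 0], ![0, -1, 0, 0, 0, 0, 0]],
   ![![0, 0, -1, 0, 0, 0, 0], ![0, 0, 0, 0, 0, 0, 0], ![1, 0, 0, 0, 0, 0, 0], ![0, 0, 0, 0, 0, 0, 0], ![0, 0, 0, 0, 0, 0, -1], ![0, 0, 0, 0, 0, 0, 0], ![0, 0, 0, 0, 1, 0, 0]],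
   ![![0, -1, 0, 0, 0, 0, 0], ![1, 0, 0, 0, 0, 0, 0], ![0, 0, 0, 0, 0, 0, 0], ![0, 0, 0, 0, 0, 0, 1], ![0, 0, 0, 0, 0, 0, 0], ![0, 0, 0, 0, 0, 0, 0], ![0, 0, 0, -1, 0, 0, 0]],
   ![![0, 0, 0, 0, 0, 0, 0], ![0, 0, 0, 0, 0, 0, 0], ![0, 0, 0, 0, 0, 0, 0], ![0, 0, 0, 0, 0, 0, 0], ![0, 0, 0, 0, 0, 0, 0], ![0, 0, 0, 0, 0, 0, 0], ![0, 0, 0, 0, 0, 0, 0]],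
   ![![0, 0, 0, 0, 0, 0, 0], ![0, 0, -1, 0, 0, 0, 0], ![0, 1, 0, 0, 0, 0, 0], ![0, 0, 0, 0, -1, 0, 0], ![0, 0, 0, 1, 0, 0, 0], ![0, 0, 0, 0, 0, 0, 0], ![0, 0, 0, 0, 0, 0, 0]]],
  ![![![0, 0, 0, 0, 0, 0, 0], ![0, 0, 0, -1, 0, 0, 0], ![0, 0, 0, 0, 1, 0, 0], ![0, 1, 0, 0, 0, 0, 0], ![0, 0, -1, 0, 0, 0, 0], ![0, 0, 0, 0, 0, 0, 0], ![0, 0, 0, 0, 0, 0, 0]],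
   ![![0, 0, 0, 1, 0, 0, 0], ![0, 0, 0, 0, 0, 0, 0], ![0, 0, 0, 0, 0, 1, 0], ![-1, 0, 0, 0, 0, 0, 0], ![0, 0, 0, 0, 0, 0, 0], ![0, 0, -1, 0, 0, 0, 0], ![0, 0, 0, 0, 0, 0, 0]],
   ![![0, 0, 0, 0, -1, 0, 0], ![0, 0, 0, 0, 0, -1, 0], ![0, 0, 0, 0, 0, 0, 0], ![0, 0, 0, 0, 0, 0, 0], ![1, 0, 0, 0, 0, 0, 0], ![0, 1, 0, 0, 0, 0, 0], ![0, 0, 0, 0, 0, 0, 0]],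
   ![![0, -1, 0, 0, 0, 0, 0], ![1, 0, 0, 0, 0, 0, 0], ![0, 0, 0, 0, 0, 0, 0], ![0, 0, 0, 0, 0, 0, 0], ![0, 0, 0, 0, 0, 1, 0], ![0, 0, 0, 0, -1, 0, 0], ![0, 0, 0, 0, 0, 0, 0]],
   ![![0, 0, 1, 0, 0, 0, 0], ![0, 0, 0, 0, 0, 0, 0], ![-1, 0, 0, 0, 0, 0, 0], ![0, 0, 0, 0, 0, -1, 0], ![0, 0, 0, 0, 0, 0, 0], ![0, 0, 0, 1, 0, 0, 0], ![0, 0, 0, 0, 0, 0, 0]],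
   ![![0, 0, 0, 0, 0, 0, 0], ![0, 0, 1, 0, 0, 0, 0], ![0, -1, 0, 0, 0, 0, 0], ![0, 0, 0, 0, 1, 0, 0], ![0, 0, 0, -1, 0, 0, 0], ![0, 0, 0, 0, 0, 0, 0], ![0, 0, 0, 0, 0, 0, 0]],
   ![![0, 0, 0, 0, 0, 0, 0], ![0, 0, 0, 0, 0, 0, 0], ![0, 0, 0, 0, 0, 0, 0], ![0, 0, 0, 0, 0, 0, 0], ![0, 0, 0, 0, 0, 0, 0], ![0, 0, 0, 0, 0, 0, 0], ![0, 0, 0, 0, 0, 0, 0]]]]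

set_option maxHeartbeats 2000000 in
lemma phiEq : ∀ i j k : Fin 7, g2phiZ i j k = phiT i j k := by decide
set_option maxHeartbeats 4000000 in
lemma psiEq : ∀ i j k l : Fin 7, g2psiZ i j k l = psiT i j k l := by decide
set_option maxHeartbeats 4000000 in
lemma keyT : ∀ m i j k : Fin 7,
    (∑ p : Fin 7, (phiT p i j * phiT m p k + phiT p j k * phiT m p i
      + phiT p k i * phiT m p j)) = 3 * psiT m i j k := by decide

lemma keyZ (m i j k : Fin 7) :
    (∑ p : Fin 7, (g2phiZ p i j * g2phiZ m p k + g2phiZ p j k * g2phiZ m p i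
      + g2phiZ p k i * g2phiZ m p j)) = 3 * g2psiZ m i j k := by
  simp only [phiEq, psiEq]; exact keyT m i j k

lemma kd_cast (i j : Fin 7) : kd i j = ((kdZ i j : ℤ) : ℝ) := by
  unfold kd kdZ; split <;> simp

lemma g2phi_cast (i j k : Fin 7) : g2phi i j k = ((g2phiZ i j k : ℤ) : ℝ) := by
  simp only [g2phi, g2phiZ, E3, E3Z, kd_cast]; push_cast; ring

lemma g2psi_cast (i j k l : Fin 7) : g2psi i j k l = ((g2psiZ i j k l : ℤ) : ℝ) := by
  simp only [g2psi, g2psiZ, E4, E4Z, E3, E3Z, kd_cast]; push_cast; ring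

lemma g2phi_swap23 (p a b : Fin 7) : g2phi p b a = - g2phi p a b := by
  simp only [g2phi, E3]; ring

lemma key_real (m i j k : Fin 7) :
    (∑ p : Fin 7,
        (g2phi p i j * g2phi m p k + g2phi p j k * g2phi m p i + g2phi p k i * g2phi m p j)) =
      3 * g2psi m i j k := by
  simp only [g2phi_cast, g2psi_cast]
  exact_mod_cast keyZ m i j k

lemma univ_perm3 : (Finset.univ : Finset (Equiv.Perm (Fin 3))) =
    {Equiv.refl (Fin 3), Equiv.swap 0 1, Equiv.swap 0 2, Equiv.swap 1 2, finRotate 3,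
      (finRotate 3)⁻¹} := by decide

lemma wedge21_eq (α : Fin 7 → Fin 7 → ℝ) (β : Fin 7 → ℝ)
    (hα : ∀ a b, α b a = -α a b) (i j k : Fin 7) :
    wedge21 α β i j k = α i j * β k + α j k * β i + α k i * β j := by
  rw [wedge21, univ_perm3]
  rw [Finset.sum_insert (by decide), Finset.sum_insert (by decide),
    Finset.sum_insert (by decide), Finset.sum_insert (by decide),
    Finset.sum_insert (by decide), Finset.sum_singleton]
  have s1 : Equiv.Perm.sign (Equiv.refl (Fin 3)) = 1 := by decide
  have s2 : Equiv.Perm.sign (Equiv.swap (0:Fin 3) 1) = -1 := by decide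
  have s3 : Equiv.Perm.sign (Equiv.swap (0:Fin 3) 2) = -1 := by decide
  have s4 : Equiv.Perm.sign (Equiv.swap (1:Fin 3) 2) = -1 := by decide
  have s5 : Equiv.Perm.sign (finRotate 3) = 1 := by decide
  have s6 : Equiv.Perm.sign (finRotate 3)⁻¹ = 1 := by decide
  rw [s1, s2, s3, s4, s5, s6]
  norm_num [show ∀ x : Fin 3, (Equiv.refl (Fin 3)) x = x from fun _ => rfl,
    show (Equiv.swap (0:Fin 3) 1) 0 = 1 from by decide,
    show (Equiv.swap (0:Fin 3) 1) 1 = 0 from by decide,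
    show (Equiv.swap (0:Fin 3) 1) 2 = 2 from by decide,
    show (Equiv.swap (0:Fin 3) 2) 0 = 2 from by decide,
    show (Equiv.swap (0:Fin 3) 2) 1 = 1 from by decide,
    show (Equiv.swap (0:Fin 3) 2) 2 = 0 from by decide,
    show (Equiv.swap (1:Fin 3) 2) 0 = 0 from by decide,
    show (Equiv.swap (1:Fin 3) 2) 1 = 2 from by decide,
    show (Equiv.swap (1:Fin 3) 2) 2 = 1 from by decide,
    show (finRotate 3) 0 = 1 from by decide,
    show (finRotate 3) 1 = 2 from by decide,
    show (finRotate 3) 2 = 0 from by decide,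
    show (finRotate 3)⁻¹ 0 = 2 from by decide,
    show (finRotate 3)⁻¹ 1 = 0 from by decide,
    show (finRotate 3)⁻¹ 2 = 1 from by decide]
  rw [show (![i, j, k] : Fin 3 → Fin 7) 2 = k from rfl]
  rw [hα j i, hα k i, hα k j]
  ring

/-- Proposition 2.6, first identity:
`Σ_p (e_p ⌟ φ) ∧ (e_p ⌟ e_m ⌟ φ) = 3 (e_m ⌟ ψ)`; explicitly
`Σ_p (φ_{pij} φ_{mpk} + φ_{pjk} φ_{mpi} + φ_{pki} φ_{mpj}) = 3 ψ_{mijk}`. -/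
theorem stmt_13 (m i j k : Fin 7) :
    (∑ p : Fin 7, wedge21 (fun a b => g2phi p a b) (fun a => g2phi m p a) i j k =
      3 * g2psi m i j k) ∧
    (∑ p : Fin 7,
        (g2phi p i j * g2phi m p k + g2phi p j k * g2phi m p i + g2phi p k i * g2phi m p j) =
      3 * g2psi m i j k) := by
  constructor
  · have h : ∀ p : Fin 7,
        wedge21 (fun a b => g2phi p a b) (fun a => g2phi m p a) i j k =
          g2phi p i j * g2phi m p k + g2phi p j k * g2phi m p i + g2phi p k i * g2phi m p j :=
      fun p => wedge21_eq _ _ (fun a b => g2phi_swap23 p a b) i j k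
    rw [Finset.sum_congr rfl (fun p _ => h p)]
    exact key_real m i j k
  · exact key_real m i j k
end

section
/- Let n ≥ 1 and 1 ≤ r ≤ n, and let V be an n-dimensional real inner product space with orthonormal basis (e_p)_{p ∈ Fin n}. For every alternating (r+1)-linear form η on V and every alternating (n−r+1)-linear form α on V, the alternating n-linear form Σ_{p ∈ Fin n} (e_p ⌟ η) ∧ (e_p ⌟ α) is identically zero. -/
open AlternatingMap

/-- If some argument of `η.curryLeft x` equals `x`, the value is zero. -/
lemma curryLeft_apply_eq_zero {V : Type*} [NormedAddCommGroup V] [InnerProductSpace ℝ V]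
    {k : ℕ} (η : AlternatingMap ℝ V ℝ (Fin (k + 1))) (x : V) (u : Fin k → V)
    (j : Fin k) (h : u j = x) : η.curryLeft x u = 0 := by
  rw [AlternatingMap.curryLeft_apply_apply]
  refine η.map_eq_zero_of_eq _ (i := 0) (j := j.succ) ?_ (by simp [Fin.ext_iff])
  simp [Matrix.cons_val_zero, Matrix.cons_val_succ, h]

lemma altmap_sum_apply {R M N ι κ : Type*} [CommSemiring R] [AddCommMonoid M]
    [AddCommMonoid N] [Module R M] [Module R N] (s : Finset κ)
    (f : κ → AlternatingMap R M N ι) (w : ι → M) :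
    (∑ i ∈ s, f i) w = ∑ i ∈ s, f i w := by
  induction s using Finset.cons_induction with
  | empty => simp
  | cons a s ha ih => simp [Finset.sum_cons, ih]

/-- Corollary 3.2: let `V` be an `n`-dimensional real inner product space with orthonormal
basis `(e_p)`, let `η` be an alternating `(r+1)`-form and `α` an alternating `(n−r+1)`-form
on `V`, with `1 ≤ r ≤ n`. Then the `n`-form `Σ_p (e_p ⌟ η) ∧ (e_p ⌟ α)` vanishes
identically. (The wedge product of the `r`-form `e_p ⌟ η` and the `(n−r)`-form `e_p ⌟ α`
is realized via `AlternatingMap.domCoprod`, followed by multiplication `ℝ ⊗ ℝ → ℝ` and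
reindexing `Fin r ⊕ Fin (n−r) ≃ Fin n`.) -/
theorem stmt_17 (n r : ℕ) (hn : 1 ≤ n) (hr : 1 ≤ r) (hrn : r ≤ n)
    {V : Type*} [NormedAddCommGroup V] [InnerProductSpace ℝ V]
    (e : OrthonormalBasis (Fin n) ℝ V)
    (η : AlternatingMap ℝ V ℝ (Fin (r + 1)))
    (α : AlternatingMap ℝ V ℝ (Fin (n - r + 1))) :
    ∑ p : Fin n,
        AlternatingMap.domDomCongr
          (finSumFinEquiv.trans (finCongr (Nat.add_sub_cancel' hrn)))
          ((TensorProduct.lid ℝ ℝ).toLinearMap.compAlternatingMap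
            (AlternatingMap.domCoprod (η.curryLeft (e p)) (α.curryLeft (e p)))) =
      0 := by
  classical
  set σ0 := finSumFinEquiv.trans (finCongr (Nat.add_sub_cancel' hrn)) with hσ0
  apply Module.Basis.ext_alternating e.toBasis
  intro v hv
  have hvs : Function.Surjective v := Finite.injective_iff_surjective.mp hv
  rw [altmap_sum_apply, AlternatingMap.zero_apply]
  refine Finset.sum_eq_zero fun p _ => ?_
  rw [AlternatingMap.domDomCongr_apply, LinearMap.compAlternatingMap_apply,
    AlternatingMap.domCoprod_apply, MultilinearMap.sum_apply, map_sum]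
  refine Finset.sum_eq_zero fun σ _ => ?_
  induction σ using Quotient.inductionOn with
  | h σ =>
    rw [AlternatingMap.domCoprod.summand_mk'', MultilinearMap.smul_apply,
      MultilinearMap.domDomCongr_apply, MultilinearMap.domCoprod_apply]
    -- find where `p` appears
    obtain ⟨i, hi⟩ := hvs p
    obtain ⟨j, rfl⟩ : ∃ j, σ0 (σ j) = i := ⟨σ⁻¹ (σ0.symm i), by simp⟩
    have hbe : ∀ q, (e.toBasis q : V) = e q := fun q => by simp
    cases j with
    | inl j0 =>
      have h0 : (η.curryLeft (e p)) (fun i => e.toBasis (v (σ0 (σ (Sum.inl i))))) = 0 :=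
        curryLeft_apply_eq_zero η (e p) _ j0 (by rw [hbe, hi])
      simp only [Function.comp_def, AlternatingMap.coe_multilinearMap, h0,
        TensorProduct.zero_tmul, smul_zero, _root_.map_zero]
    | inr j0 =>
      have h0 : (α.curryLeft (e p)) (fun i => e.toBasis (v (σ0 (σ (Sum.inr i))))) = 0 :=
        curryLeft_apply_eq_zero α (e p) _ j0 (by rw [hbe, hi])
      simp only [Function.comp_def, AlternatingMap.coe_multilinearMap, h0,
        TensorProduct.tmul_zero, smul_zero, _root_.map_zero]
end
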